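/- Suppose A ⊕ A' = {0,...,R−1} with A ≠ {0} and A' ≠ {0}, R ≥ 2. Then there exist subsets L, L' ⊂ {0,...,R−1} with L ⊕ L' = {0,...,R−1} such that the matrices ((1/√#A) e^{2πi a l / R})_{a∈A, l∈L} and ((1/√#A') e^{2πi a' l' / R})_{a'∈A', l'∈L'} are both unitary. -/

import Mathlib

open Complex Real

/-- `A ⊕ A' = {0,…,R−1}`: the sum map `A × A' → {0,…,R−1}` is a bijection. -/
def ComplPair (A A' : Finset ℕ) (R : ℕ) : Prop :=
  (∀ a ∈ A, ∀ a' ∈ A', a + a' < R) ∧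
    ∀ k < R, ∃! p : ℕ × ℕ, p.1 ∈ A ∧ p.2 ∈ A' ∧ p.1 + p.2 = k

/-- `(R,A,L)` is a Hadamard system: `#A = #L` and the square matrix
`(1/√#A · e^{2πial/R})_{a∈A, l∈L}` is unitary (its rows are orthonormal). -/
def IsHadamard (R : ℕ) (A L : Finset ℕ) : Prop :=
  A.card = L.card ∧
    ∀ a ∈ A, ∀ b ∈ A,
      (A.card : ℂ)⁻¹ * ∑ l ∈ L, Complex.exp (2 * Real.pi * Complex.I * a * l / R) *
        starRingEnd ℂ (Complex.exp (2 * Real.pi * Complex.I * b * l / R)) =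
      if a = b then 1 else 0

/-!
De Bruijn's structure theorem: if `1 ∈ A` and `n` is the least nonzero element of `A'`, then
`[0, n) ⊆ A`, and an induction on the sum shows that `A` is a union of whole blocks
`[n c, n c + n)` while `A' ⊆ nℕ`; so `A = [0, n) + n C`, `A' = n C'` with `C ⊕ C' = [0, m)`,
`R = n m`. By induction on `R`, `C` and `C'` have spectra `K ⊕ K' = [0, m)`, and then
`L = K + m [0, n)`, `L' = K'` work: Hadamard systems multiply, because the phase
`(b₁ + n b₂)(l₂ + m l₁) / (n m)` is, modulo integers, `b₁ l₁ / n` plus a term free of `l₁`,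
so the row sums factor into a DFT sum and a row sum for `(m, C, K)`.
-/
open Finset

noncomputable def expTwoPiI (x : ℝ) : ℂ := Complex.exp (2 * π * I * x)

lemma expTwoPiI_add (x y : ℝ) : expTwoPiI (x + y) = expTwoPiI x * expTwoPiI y := by
  rw [expTwoPiI, expTwoPiI, expTwoPiI, ← Complex.exp_add]
  push_cast
  ring_nf

lemma expTwoPiI_eq_one_iff {x : ℝ} : expTwoPiI x = 1 ↔ ∃ k : ℤ, x = k := by
  have h2πI : (2 * π * I : ℂ) ≠ 0 := by simp [Real.pi_ne_zero]
  rw [expTwoPiI, Complex.exp_eq_one_iff]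
  refine exists_congr fun k => ⟨fun h => ?_, fun h => by rw [h]; push_cast; ring⟩
  exact_mod_cast mul_left_cancel₀ h2πI (h.trans (mul_comm _ _))

lemma expTwoPiI_intCast (k : ℤ) : expTwoPiI k = 1 := expTwoPiI_eq_one_iff.2 ⟨k, rfl⟩

@[simp]
lemma expTwoPiI_zero : expTwoPiI 0 = 1 := by simpa using expTwoPiI_intCast 0

lemma expTwoPiI_add_intCast (x : ℝ) (k : ℤ) : expTwoPiI (x + k) = expTwoPiI x := by
  rw [expTwoPiI_add, expTwoPiI_intCast, mul_one]

lemma expTwoPiI_nat_mul (j : ℕ) (x : ℝ) : expTwoPiI (j * x) = expTwoPiI x ^ j := by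
  rw [expTwoPiI, expTwoPiI, ← Complex.exp_nat_mul]
  push_cast
  ring_nf

lemma sum_range_expTwoPiI_eq_zero {n : ℕ} {d : ℤ} (hd : ¬ (n : ℤ) ∣ d) :
    ∑ j ∈ range n, expTwoPiI (d * j / n) = 0 := by
  obtain rfl | hn := Nat.eq_zero_or_pos n
  · simp
  have hroot : expTwoPiI (d / n) ^ n = 1 := by
    rw [← expTwoPiI_nat_mul, mul_div_cancel₀ _ (by positivity), expTwoPiI_intCast]
  have hne : expTwoPiI (d / n) ≠ 1 := by
    rintro h
    obtain ⟨k, hk⟩ := expTwoPiI_eq_one_iff.1 h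
    rw [div_eq_iff (by positivity)] at hk
    exact hd ⟨k, by exact_mod_cast hk.trans (mul_comm _ _)⟩
  have hpow : ∀ j : ℕ, expTwoPiI (d * j / n) = expTwoPiI (d / n) ^ j := fun j => by
    rw [← expTwoPiI_nat_mul]; ring_nf
  simp only [hpow]
  rw [geom_sum_eq hne, hroot, sub_self, zero_div]

lemma isHadamard_iff {R : ℕ} {A L : Finset ℕ} : IsHadamard R A L ↔ #A = #L ∧
    ∀ a ∈ A, ∀ b ∈ A, a ≠ b → ∑ l ∈ L, expTwoPiI (((a : ℝ) - b) * l / R) = 0 := by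
  have hterm : ∀ a b l : ℕ, Complex.exp (2 * π * I * a * l / R) *
      starRingEnd ℂ (Complex.exp (2 * π * I * b * l / R)) =
      expTwoPiI (((a : ℝ) - b) * l / R) := by
    intro a b l
    rw [← Complex.exp_conj, ← Complex.exp_add, expTwoPiI]
    simp only [map_div₀, map_mul, Complex.conj_ofReal, Complex.conj_I, map_ofNat, map_natCast]
    push_cast
    ring_nf
  simp only [IsHadamard, hterm]
  refine and_congr_right fun hcard => forall₂_congr fun a ha => forall₂_congr fun b hb => ?_
  have hA : (#A : ℂ) ≠ 0 := Nat.cast_ne_zero.2 (card_ne_zero_of_mem ha)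
  by_cases hab : a = b
  · subst hab
    simp [← hcard, hA]
  · simp [hab, hA]

lemma isHadamard_range (n : ℕ) : IsHadamard n (range n) (range n) := by
  refine isHadamard_iff.2 ⟨rfl, fun a ha b hb hab => ?_⟩
  rw [mem_range] at ha hb
  have hd : ¬ (n : ℤ) ∣ (a - b : ℤ) := fun h => hab <| by
    exact_mod_cast Int.eq_of_sub_eq_zero
      (Int.eq_zero_of_abs_lt_dvd h (abs_sub_lt_iff.2 ⟨by omega, by omega⟩))
  simpa using sum_range_expTwoPiI_eq_zero hd

lemma isHadamard_singleton_zero (R : ℕ) : IsHadamard R {0} {0} :=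
  isHadamard_iff.2 ⟨rfl, by simp⟩

lemma add_mul_eq_add_mul_iff {n x y u v : ℕ} (hx : x < n) (hy : y < n) :
    x + n * u = y + n * v ↔ x = y ∧ u = v := by
  refine ⟨fun h => ?_, fun ⟨hxy, huv⟩ => hxy ▸ huv ▸ rfl⟩
  obtain ⟨hu, hx'⟩ := (Nat.div_mod_unique (by omega)).2 ⟨h, hx⟩
  obtain ⟨hv, hy'⟩ := (Nat.div_mod_unique (by omega)).2 ⟨rfl, hy⟩
  exact ⟨hx'.symm.trans hy', hu.symm.trans hv⟩

/-- Two-digit numbers in base `n`, with low digits in `X` and high digits in `U`. -/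
def mixedRadix (n : ℕ) (X U : Finset ℕ) : Finset ℕ := image₂ (fun x u => x + n * u) X U

section MixedRadix

variable {n : ℕ} {X U : Finset ℕ}

lemma mem_mixedRadix {k : ℕ} : k ∈ mixedRadix n X U ↔ ∃ x ∈ X, ∃ u ∈ U, x + n * u = k :=
  mem_image₂

lemma sum_mixedRadix {M : Type*} [AddCommMonoid M] (hX : ∀ x ∈ X, x < n) (f : ℕ → M) :
    ∑ k ∈ mixedRadix n X U, f k = ∑ x ∈ X, ∑ u ∈ U, f (x + n * u) := by
  rw [mixedRadix, ← image_uncurry_product, sum_image, sum_product]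
  · rfl
  rintro ⟨x, u⟩ hxu ⟨y, v⟩ hyv h
  simp only [coe_product, Set.mem_prod, mem_coe] at hxu hyv
  simpa using (add_mul_eq_add_mul_iff (hX x hxu.1) (hX y hyv.1)).1 h

lemma card_mixedRadix (hX : ∀ x ∈ X, x < n) : #(mixedRadix n X U) = #X * #U := by
  rw [card_eq_sum_ones, sum_mixedRadix hX]
  simp

end MixedRadix

lemma IsHadamard.mixedRadix {n m : ℕ} {B₁ L₁ B₂ L₂ : Finset ℕ} (h₁ : IsHadamard n B₁ L₁)
    (h₂ : IsHadamard m B₂ L₂) (hB₁ : ∀ b ∈ B₁, b < n) (hL₂ : ∀ l ∈ L₂, l < m) :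
    IsHadamard (n * m) (mixedRadix n B₁ B₂) (mixedRadix m L₂ L₁) := by
  rw [isHadamard_iff] at *
  refine ⟨by rw [card_mixedRadix hB₁, card_mixedRadix hL₂, h₁.1, h₂.1, mul_comm], ?_⟩
  simp only [mem_mixedRadix]
  rintro _ ⟨b₁, hb₁, b₂, hb₂, rfl⟩ _ ⟨b₁', hb₁', b₂', hb₂', rfl⟩ hne
  rw [sum_mixedRadix hL₂]
  have hn : (n : ℝ) ≠ 0 := Nat.cast_ne_zero.2 (by have := hB₁ b₁ hb₁; omega)
  -- the phase splits into a row-`B₁` part, a row-`B₂` part and the integer `(b₂ - b₂') l₁`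
  have hsplit : ∀ l₂ ∈ L₂, ∀ l₁ : ℕ,
      expTwoPiI ((((b₁ + n * b₂ : ℕ) : ℝ) - (b₁' + n * b₂' : ℕ)) * (l₂ + m * l₁ : ℕ) /
          (n * m : ℕ)) =
        expTwoPiI (((b₁ : ℝ) - b₁') * l₁ / n) *
          expTwoPiI ((((b₁ : ℝ) - b₁') / (n * m) + ((b₂ : ℝ) - b₂') / m) * l₂) := by
    intro l₂ hl₂ l₁
    have hm : (m : ℝ) ≠ 0 := Nat.cast_ne_zero.2 (by have := hL₂ l₂ hl₂; omega)
    rw [← expTwoPiI_add, ← expTwoPiI_add_intCast (_ + _) (((b₂ : ℤ) - b₂') * l₁)]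
    congr 1
    push_cast
    field_simp
    ring
  rw [sum_congr rfl fun l₂ hl₂ => sum_congr rfl fun l₁ _ => hsplit l₂ hl₂ l₁]
  by_cases hb : b₁ = b₁'
  · subst hb
    have hb₂b₂' : b₂ ≠ b₂' := fun h => hne (h ▸ rfl)
    simp only [sub_self, zero_mul, zero_div, zero_add, expTwoPiI_zero, one_mul, sum_const,
      nsmul_eq_mul, ← mul_sum, div_mul_eq_mul_div, h₂.2 b₂ hb₂ b₂' hb₂' hb₂b₂', mul_zero]
  · rw [sum_comm, ← sum_mul_sum, h₁.2 b₁ hb₁ b₁' hb₁' hb, zero_mul]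

namespace ComplPair

variable {A A' : Finset ℕ} {R : ℕ}

lemma mk' (hlt : ∀ a ∈ A, ∀ a' ∈ A', a + a' < R)
    (hex : ∀ k < R, ∃ a ∈ A, ∃ a' ∈ A', a + a' = k)
    (hinj : ∀ a ∈ A, ∀ a' ∈ A', ∀ b ∈ A, ∀ b' ∈ A', a + a' = b + b' → a = b ∧ a' = b') :
    ComplPair A A' R := by
  refine ⟨hlt, fun k hk => ?_⟩
  obtain ⟨a, ha, a', ha', rfl⟩ := hex k hk
  refine ⟨(a, a'), ⟨ha, ha', rfl⟩, fun ⟨b, b'⟩ ⟨hb, hb', hs⟩ => ?_⟩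
  obtain ⟨rfl, rfl⟩ := hinj b hb b' hb' a ha a' ha' hs
  rfl

lemma add_lt (h : ComplPair A A' R) {a a' : ℕ} (ha : a ∈ A) (ha' : a' ∈ A') : a + a' < R :=
  h.1 a ha a' ha'

lemma exists_add_eq (h : ComplPair A A' R) {k : ℕ} (hk : k < R) :
    ∃ a ∈ A, ∃ a' ∈ A', a + a' = k := by
  obtain ⟨⟨a, a'⟩, ⟨ha, ha', hs⟩, -⟩ := h.2 k hk
  exact ⟨a, ha, a', ha', hs⟩

lemma eq_of_add_eq (h : ComplPair A A' R) {a a' b b' : ℕ} (ha : a ∈ A) (ha' : a' ∈ A')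
    (hb : b ∈ A) (hb' : b' ∈ A') (hs : a + a' = b + b') : a = b ∧ a' = b' := by
  obtain ⟨p, -, hp⟩ := h.2 _ (h.add_lt ha ha')
  have h₁ := hp (a, a') ⟨ha, ha', rfl⟩
  have h₂ := hp (b, b') ⟨hb, hb', hs.symm⟩
  simpa using h₁.trans h₂.symm

lemma symm (h : ComplPair A A' R) : ComplPair A' A R :=
  mk' (fun a' ha' a ha => add_comm a' a ▸ h.add_lt ha ha')
    (fun k hk => by
      obtain ⟨a, ha, a', ha', hs⟩ := h.exists_add_eq hk
      exact ⟨a', ha', a, ha, by omega⟩)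
    (fun a' ha' a ha b' hb' b hb hs => (h.eq_of_add_eq ha ha' hb hb' (by omega)).symm)

lemma zero_mem_left (h : ComplPair A A' R) (hR : 0 < R) : 0 ∈ A := by
  obtain ⟨a, ha, a', -, hs⟩ := h.exists_add_eq hR
  exact (show a = 0 by omega) ▸ ha

lemma zero_mem_right (h : ComplPair A A' R) (hR : 0 < R) : 0 ∈ A' :=
  h.symm.zero_mem_left hR

lemma lt_of_mem_left (h : ComplPair A A' R) (hR : 0 < R) {a : ℕ} (ha : a ∈ A) : a < R := by
  simpa using h.add_lt ha (h.zero_mem_right hR)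

lemma card_mul_card (h : ComplPair A A' R) : #A * #A' = R := by
  have himage : image₂ (· + ·) A A' = range R := by
    ext k
    simp only [mem_image₂, mem_range]
    exact ⟨fun ⟨a, ha, a', ha', hs⟩ => hs ▸ h.add_lt ha ha', fun hk => h.exists_add_eq hk⟩
  rw [← card_range R, ← himage, card_image₂_iff.2]
  rintro ⟨a, a'⟩ ⟨ha, ha'⟩ ⟨b, b'⟩ ⟨hb, hb'⟩ hs
  simpa using h.eq_of_add_eq ha ha' hb hb' hs

lemma range_singleton_zero (R : ℕ) : ComplPair (range R) {0} R :=
  mk' (by simp) (fun k hk => ⟨k, mem_range.2 hk, 0, mem_singleton_self 0, rfl⟩)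
    (by simp)

lemma eq_range_of_right_eq_singleton (h : ComplPair A {0} R) : A = range R := by
  ext k
  refine ⟨fun hk => mem_range.2 (by simpa using h.add_lt hk (mem_singleton_self 0)), fun hk => ?_⟩
  obtain ⟨a, ha, a', ha', rfl⟩ := h.exists_add_eq (mem_range.1 hk)
  rw [mem_singleton] at ha'
  simpa [ha'] using ha

lemma mixedRadix_mixedRadix {X Y U V : Finset ℕ} {m n : ℕ} (hXY : ComplPair X Y m)
    (hUV : ComplPair U V n) :
    ComplPair (mixedRadix m X U) (mixedRadix m Y V) (m * n) := by
  refine mk' ?_ (fun k hk => ?_) ?_ <;> simp only [mem_mixedRadix]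
  · rintro _ ⟨x, hx, u, hu, rfl⟩ _ ⟨y, hy, v, hv, rfl⟩
    have hxy := hXY.add_lt hx hy
    have huv : m * (u + v + 1) ≤ m * n := Nat.mul_le_mul_left m (hUV.add_lt hu hv)
    nlinarith
  · have hm : 0 < m := Nat.pos_of_mul_pos_right (by omega : 0 < m * n)
    obtain ⟨x, hx, y, hy, hxy⟩ := hXY.exists_add_eq (Nat.mod_lt k hm)
    obtain ⟨u, hu, v, hv, huv⟩ :=
      hUV.exists_add_eq ((Nat.div_lt_iff_lt_mul hm).2 (by rwa [mul_comm]))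
    refine ⟨_, ⟨x, hx, u, hu, rfl⟩, _, ⟨y, hy, v, hv, rfl⟩, ?_⟩
    calc x + m * u + (y + m * v) = (x + y) + m * (u + v) := by ring
      _ = k := by rw [hxy, huv, Nat.mod_add_div]
  · rintro _ ⟨x, hx, u, hu, rfl⟩ _ ⟨y, hy, v, hv, rfl⟩ _ ⟨x', hx', u', hu', rfl⟩
      _ ⟨y', hy', v', hv', rfl⟩ hs
    obtain ⟨hxy, huv⟩ := (add_mul_eq_add_mul_iff (hXY.add_lt hx hy) (hXY.add_lt hx' hy')).1
      (by linarith : x + y + m * (u + v) = x' + y' + m * (u' + v'))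
    obtain ⟨rfl, rfl⟩ := hXY.eq_of_add_eq hx hy hx' hy' hxy
    obtain ⟨rfl, rfl⟩ := hUV.eq_of_add_eq hu hv hu' hv' huv
    exact ⟨rfl, rfl⟩

lemma of_mixedRadix_mixedRadix {X Y U V : Finset ℕ} {m n : ℕ} (hn : 0 < n) (hXY : ComplPair X Y n)
    (h : ComplPair (mixedRadix n X U) (mixedRadix n Y V) (n * m)) :
    ComplPair U V m := by
  have hX : ∀ {u}, u ∈ U → 0 + n * u ∈ mixedRadix n X U := fun hu =>
    mem_mixedRadix.2 ⟨0, hXY.zero_mem_left hn, _, hu, rfl⟩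
  have hY : ∀ {v}, v ∈ V → 0 + n * v ∈ mixedRadix n Y V := fun hv =>
    mem_mixedRadix.2 ⟨0, hXY.zero_mem_right hn, _, hv, rfl⟩
  refine mk' (fun u hu v hv => ?_) (fun k hk => ?_) (fun u hu v hv u' hu' v' hv' hs => ?_)
  · have := h.add_lt (hX hu) (hY hv)
    exact Nat.lt_of_mul_lt_mul_left (by linarith : n * (u + v) < n * m)
  · obtain ⟨_, hxu, _, hyv, hs⟩ := h.exists_add_eq (Nat.mul_lt_mul_of_pos_left hk hn)
    obtain ⟨x, hx, u, hu, rfl⟩ := mem_mixedRadix.1 hxu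
    obtain ⟨y, hy, v, hv, rfl⟩ := mem_mixedRadix.1 hyv
    obtain ⟨-, huv⟩ := (add_mul_eq_add_mul_iff (hXY.add_lt hx hy) hn).1
      (by linarith : x + y + n * (u + v) = 0 + n * k)
    exact ⟨u, hu, v, hv, huv⟩
  · obtain ⟨hu, hv⟩ := h.eq_of_add_eq (hX hu) (hY hv) (hX hu') (hY hv')
      (by simp only [zero_add, ← mul_add, hs])
    exact ⟨Nat.eq_of_mul_eq_mul_left hn (by simpa using hu),
      Nat.eq_of_mul_eq_mul_left hn (by simpa using hv)⟩

section DeBruijn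

variable {n : ℕ}

lemma eq_zero_of_add_eq_add (h : ComplPair A A' R) {x t a a' : ℕ} (hx : x ∈ A) (hnx : n ∣ x)
    (ht : t < n) (ha : a ∈ A) (ha' : a' ∈ A') (hs : a + a' = x + t) (hna' : n ∣ a')
    (hblock : n * (a / n) ∈ A) : a' = 0 := by
  obtain ⟨c, rfl⟩ := hna'
  obtain ⟨d, rfl⟩ := hnx
  have hdigits : a % n + n * (a / n + c) = t + n * d := by
    rw [mul_add, ← add_assoc, Nat.mod_add_div]; omega
  obtain ⟨-, hq⟩ := (add_mul_eq_add_mul_iff (Nat.mod_lt a (by omega)) ht).1 hdigits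
  have h0 : 0 ∈ A' := h.zero_mem_right (by have := h.add_lt ha ha'; omega)
  simpa using (h.eq_of_add_eq hblock ha' hx h0 (by rw [← hq, mul_add, add_zero])).2

lemma right_eq_of_add_eq_mul_add (h : ComplPair A A' R) (hn : n ∈ A') (hsmall : ∀ r < n, r ∈ A)
    {a a' : ℕ} (ha : a ∈ A) (ha' : a' ∈ A')
    (IH : ∀ b ∈ A, ∀ b' ∈ A', b + b' < a + a' → n ∣ b' ∧ n * (b / n) ∈ A)
    {q t x b' : ℕ} (ht0 : 0 < t) (ht : t < n) (hk : a + a' = n * q + t)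
    (hx : x ∈ A) (hb' : b' ∈ A') (hxb : x + b' = n * q) : a' = b' := by
  have h0 : 0 ∈ A := hsmall 0 (by omega)
  have h0' : 0 ∈ A' := h.zero_mem_right (by have := h.add_lt ha ha'; omega)
  have hnx : n ∣ x :=
    (Nat.dvd_add_left (IH x hx b' hb' (by omega)).1).1 ⟨q, hxb⟩
  rcases Nat.eq_zero_or_pos b' with rfl | hb'pos
  · rcases Nat.eq_zero_or_pos a with rfl | hapos
    · -- `n * q + t ∈ A'` would make `(n - t) + (n * q + t) = n * q + n` ambiguous
      obtain ⟨hnt, -⟩ := h.eq_of_add_eq (hsmall (n - t) (by omega)) ha' hx hn (by omega)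
      have hq : q = 0 := by
        by_contra hq
        have := Nat.le_mul_of_pos_right n (Nat.pos_of_ne_zero hq)
        omega
      subst hq
      omega
    · rcases Nat.eq_zero_or_pos a' with ha'0 | ha'pos
      · exact ha'0
      exact h.eq_zero_of_add_eq_add hx hnx ht ha ha' (by omega)
        (IH 0 h0 a' ha' (by omega)).1 (IH a ha 0 h0' (by omega)).2
  · obtain ⟨y, hy, c', hc', hyc⟩ := h.exists_add_eq (show x + t < R by
      have := h.add_lt ha ha'; omega)
    obtain ⟨hnc', hyblock⟩ := IH y hy c' hc' (by omega)
    obtain rfl := h.eq_zero_of_add_eq_add hx hnx ht hy hc' hyc hnc' hyblock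
    exact (h.eq_of_add_eq ha ha' hy hb' (by omega)).2

lemma dvd_and_mul_div_mem (h : ComplPair A A' R) (hn0 : 0 < n) (hn : n ∈ A')
    (hsmall : ∀ r < n, r ∈ A) {a a' : ℕ} (ha : a ∈ A) (ha' : a' ∈ A') :
    n ∣ a' ∧ n * (a / n) ∈ A := by
  induction hk : a + a' using Nat.strong_induction_on generalizing a a' with
  | _ k IH' =>
  have IH : ∀ b ∈ A, ∀ b' ∈ A', b + b' < a + a' → n ∣ b' ∧ n * (b / n) ∈ A :=
    fun b hb b' hb' hlt => IH' _ (hk ▸ hlt) hb hb' rfl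
  obtain ⟨q, t, ht, hqt⟩ : ∃ q t, t < n ∧ a + a' = n * q + t :=
    ⟨k / n, k % n, Nat.mod_lt k hn0, hk.trans (Nat.div_add_mod k n).symm⟩
  rcases Nat.eq_zero_or_pos t with rfl | htpos
  · have hna' : n ∣ a' := by
      rcases Nat.eq_zero_or_pos a with rfl | hapos
      · exact ⟨q, by omega⟩
      · exact (IH 0 (hsmall 0 hn0) a' ha' (by omega)).1
    have hna : n ∣ a := (Nat.dvd_add_left hna').1 ⟨q, hqt⟩
    exact ⟨hna', by rwa [Nat.mul_div_cancel' hna]⟩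
  obtain ⟨x, hx, b', hb', hxb⟩ := h.exists_add_eq (show n * q < R by
    have := h.add_lt ha ha'; omega)
  obtain ⟨hnb', -⟩ := IH x hx b' hb' (by omega)
  obtain rfl := h.right_eq_of_add_eq_mul_add hn hsmall ha ha' IH htpos ht hqt hx hb' hxb
  obtain ⟨c, rfl⟩ := (Nat.dvd_add_left hnb').1 ⟨q, hxb⟩
  have hac : a / n = c := by
    rw [show a = n * c + t by omega, Nat.mul_add_div hn0, Nat.div_eq_of_lt ht, add_zero]
  exact ⟨hnb', hac ▸ hx⟩

lemma add_mem_left_of_mul_mem (h : ComplPair A A' R) (hn0 : 0 < n) (hn : n ∈ A')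
    (hsmall : ∀ r < n, r ∈ A) {c r : ℕ} (hc : n * c ∈ A) (hr : r < n) : n * c + r ∈ A := by
  obtain ⟨y, hy, c', hc', hyc⟩ := h.exists_add_eq (show n * c + r < R by
    have := h.add_lt hc hn; omega)
  obtain ⟨hnc', hyblock⟩ := h.dvd_and_mul_div_mem hn0 hn hsmall hy hc'
  obtain rfl := h.eq_zero_of_add_eq_add hc (dvd_mul_right n c) hr hy hc' hyc hnc' hyblock
  simpa [← hyc] using hy

lemma eq_mixedRadix (h : ComplPair A A' R) (hn0 : 0 < n) (hn : n ∈ A')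
    (hsmall : ∀ r < n, r ∈ A) :
    A = mixedRadix n (range n) (A.image (· / n)) ∧ A' = mixedRadix n {0} (A'.image (· / n)) := by
  have h0 : 0 ∈ A := hsmall 0 hn0
  have h0' : 0 ∈ A' := h.zero_mem_right (by have := h.add_lt h0 hn; omega)
  constructor <;> ext k <;> simp only [mem_mixedRadix, mem_range, mem_image, mem_singleton]
  · refine ⟨fun hk => ⟨k % n, Nat.mod_lt k hn0, _, ⟨k, hk, rfl⟩, Nat.mod_add_div k n⟩, ?_⟩
    rintro ⟨r, hr, _, ⟨a, ha, rfl⟩, rfl⟩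
    rw [add_comm]
    exact h.add_mem_left_of_mul_mem hn0 hn hsmall (h.dvd_and_mul_div_mem hn0 hn hsmall ha h0').2 hr
  · refine ⟨fun hk => ⟨0, rfl, _, ⟨k, hk, rfl⟩, ?_⟩, ?_⟩
    · rw [zero_add, Nat.mul_div_cancel' (h.dvd_and_mul_div_mem hn0 hn hsmall h0 hk).1]
    · rintro ⟨_, rfl, _, ⟨a', ha', rfl⟩, rfl⟩
      rwa [zero_add, Nat.mul_div_cancel' (h.dvd_and_mul_div_mem hn0 hn hsmall h0 ha').1]

lemma exists_mixedRadix (h : ComplPair A A' R) (hR : 0 < R) (h1 : 1 ∈ A) (hA' : A' ≠ {0}) :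
    ∃ n m C C', 2 ≤ n ∧ R = n * m ∧ ComplPair C C' m ∧
      A = mixedRadix n (range n) C ∧ A' = mixedRadix n {0} C' := by
  have h0 := h.zero_mem_left hR
  have h0' := h.zero_mem_right hR
  have hS : (A'.erase 0).Nonempty := by
    rw [nonempty_iff_ne_empty, Ne, erase_eq_empty_iff, not_or]
    exact ⟨ne_empty_of_mem h0', hA'⟩
  obtain ⟨n, hnS, hnmin⟩ : ∃ n ∈ A'.erase 0, ∀ a' ∈ A'.erase 0, n ≤ a' :=
    ⟨_, min'_mem _ hS, fun a' ha' => min'_le _ a' ha'⟩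
  obtain ⟨hn0, hn⟩ := mem_erase.1 hnS
  have hsmall : ∀ r < n, r ∈ A := fun r hr => by
    obtain ⟨a, ha, a', ha', rfl⟩ := h.exists_add_eq (show r < R by
      have := h.add_lt h0 hn; omega)
    obtain rfl : a' = 0 := by
      by_contra ha'0
      have := hnmin a' (mem_erase.2 ⟨ha'0, ha'⟩)
      omega
    simpa using ha
  have hn2 : 2 ≤ n := by
    by_contra hn2
    obtain rfl : n = 1 := by omega
    simpa using (h.eq_of_add_eq h1 h0' h0 hn rfl).1
  obtain ⟨hA, hA'⟩ := h.eq_mixedRadix (by omega) hn hsmall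
  set C := A.image (· / n)
  set C' := A'.image (· / n)
  have hRnm : R = n * (#C * #A') := by
    rw [← h.card_mul_card, hA, card_mixedRadix (fun _ => mem_range.1), card_range, mul_assoc]
  refine ⟨n, _, C, C', hn2, hRnm,
    of_mixedRadix_mixedRadix (by omega) (range_singleton_zero n) ?_, hA, hA'⟩
  rwa [← hA, ← hA', ← hRnm]

end DeBruijn

end ComplPair

def HasHadamardDual (R : ℕ) (A A' : Finset ℕ) : Prop :=
  ∃ L L', ComplPair L L' R ∧ IsHadamard R A L ∧ IsHadamard R A' L'

section HadamardDual

variable {A A' : Finset ℕ} {R : ℕ}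

lemma HasHadamardDual.symm (h : HasHadamardDual R A A') : HasHadamardDual R A' A :=
  let ⟨L, L', hLL', hAL, hA'L'⟩ := h
  ⟨L', L, hLL'.symm, hA'L', hAL⟩

lemma ComplPair.hasHadamardDual_of_right_eq_singleton (h : ComplPair A {0} R) :
    HasHadamardDual R A {0} :=
  ⟨range R, {0}, .range_singleton_zero R, h.eq_range_of_right_eq_singleton ▸ isHadamard_range R,
    isHadamard_singleton_zero R⟩

lemma ComplPair.hasHadamardDual_of_one_mem (h : ComplPair A A' R) (hR : 0 < R) (h1 : 1 ∈ A)
    (hA' : A' ≠ {0})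
    (IH : ∀ m < R, 0 < m → ∀ C C', ComplPair C C' m → HasHadamardDual m C C') :
    HasHadamardDual R A A' := by
  obtain ⟨n, m, C, C', hn2, rfl, hCC', rfl, rfl⟩ := h.exists_mixedRadix hR h1 hA'
  have hm : 0 < m := Nat.pos_of_mul_pos_left hR
  obtain ⟨K, K', hKK', hCK, hC'K'⟩ := IH m (by nlinarith) hm C C' hCC'
  refine ⟨mixedRadix m K (range n), mixedRadix m K' {0}, ?_, ?_, ?_⟩
  · rw [mul_comm]
    exact hKK'.mixedRadix_mixedRadix (.range_singleton_zero n)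
  · exact (isHadamard_range n).mixedRadix hCK (fun _ => mem_range.1)
      (fun _ => hKK'.lt_of_mem_left hm)
  · exact (isHadamard_singleton_zero n).mixedRadix hC'K' (fun _ hb => by rw [mem_singleton.1 hb]; omega)
      (fun _ => hKK'.symm.lt_of_mem_left hm)

theorem ComplPair.hasHadamardDual (h : ComplPair A A' R) (hR : 0 < R) :
    HasHadamardDual R A A' := by
  induction R using Nat.strong_induction_on generalizing A A' with
  | _ R IH =>
  have IH' : ∀ m < R, 0 < m → ∀ C C', ComplPair C C' m → HasHadamardDual m C C' :=
    fun m hm hm0 _ _ hC => IH m hm hC hm0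
  by_cases hA' : A' = {0}
  · subst hA'
    exact h.hasHadamardDual_of_right_eq_singleton
  by_cases hA : A = {0}
  · subst hA
    exact h.symm.hasHadamardDual_of_right_eq_singleton.symm
  obtain ⟨x, hx, hx0⟩ : ∃ x ∈ A', x ≠ 0 := by
    by_contra! hA'0
    exact hA' (eq_singleton_iff_unique_mem.2 ⟨h.zero_mem_right hR, hA'0⟩)
  have hR2 : 1 < R := by have := h.symm.lt_of_mem_left hR hx; omega
  obtain ⟨a, ha, a', ha', h1⟩ := h.exists_add_eq hR2
  rcases (show a = 1 ∨ a' = 1 by omega) with rfl | rfl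
  · exact h.hasHadamardDual_of_one_mem hR ha hA' IH'
  · exact (h.symm.hasHadamardDual_of_one_mem hR ha' hA IH').symm

end HadamardDual

theorem stmt10_general (A A' : Finset ℕ) (R : ℕ) (hR : 2 ≤ R) (h : ComplPair A A' R) :
    ∃ L L' : Finset ℕ, (∀ l ∈ L, l < R) ∧ (∀ l' ∈ L', l' < R) ∧
      ComplPair L L' R ∧ IsHadamard R A L ∧ IsHadamard R A' L' := by
  obtain ⟨L, L', hLL', hAL, hA'L'⟩ := h.hasHadamardDual (by omega)
  exact ⟨L, L', fun _ => hLL'.lt_of_mem_left (by omega),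
    fun _ => hLL'.symm.lt_of_mem_left (by omega), hLL', hAL, hA'L'⟩

/-- If `A ⊕ A' = {0,…,R−1}` with `A ≠ {0}`, `A' ≠ {0}`, then there are
`L, L' ⊆ {0,…,R−1}` with `L ⊕ L' = {0,…,R−1}` such that `(R,A,L)` and
`(R,A',L')` are Hadamard systems. -/
theorem stmt10 (A A' : Finset ℕ) (R : ℕ) (hR : 2 ≤ R) (h : ComplPair A A' R)
    (hA : A ≠ {0}) (hA' : A' ≠ {0}) :
    ∃ L L' : Finset ℕ, (∀ l ∈ L, l < R) ∧ (∀ l' ∈ L', l' < R) ∧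
      ComplPair L L' R ∧ IsHadamard R A L ∧ IsHadamard R A' L' :=
  stmt10_general A A' R hR h
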